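/- For all real numbers a, b ∈ (0,1): (∂²Ξ/∂a²)(a,b) · (∂²Ξ/∂b²)(a,b) − ((∂²Ξ/∂a∂b)(a,b))² > 0, where these second partial derivatives of Ξ take real values at real arguments (a,b) ∈ (0,1)². -/

import Mathlib

open Complex Finset MeasureTheory
open scoped Real Classical

noncomputable section

/-- The set of primes `p ≤ y`. -/
def primesLe (y : ℝ) : Finset ℕ := (Finset.Iic ⌊y⌋₊).filter Nat.Prime

/-- `α` satisfies the saddle-point equation `∑_{p ≤ y} log p/(p^α − 1) = log x`. -/
def saddleEq (x y α : ℝ) : Prop :=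
  ∑ p ∈ primesLe y, Real.log p / ((p : ℝ) ^ α - 1) = Real.log x

/-- `ū = min{u, π(y)}` where `u = log x/log y`. -/
def ubar (x y : ℝ) : ℝ := min (Real.log x / Real.log y) ((primesLe y).card)

def sigma2 (y α : ℝ) : ℝ :=
  ∑ p ∈ primesLe y, (Real.log p) ^ 2 * (p : ℝ) ^ α / ((p : ℝ) ^ α - 1) ^ 2

def sigma2t (y α : ℝ) : ℝ :=
  ∑ p ∈ primesLe y, (Real.log p) ^ 2 / ((p : ℝ) ^ α - 1) ^ 2

/-- `ϱ = (1/2)(σ₂ − σ̃₂/3)^{1/2}`. -/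
def rhoXY (y α : ℝ) : ℝ := (1 / 2) * Real.sqrt (sigma2 y α - sigma2t y α / 3)

/-- `n` is `y`-friable: every prime factor of `n` is at most `y`. -/
def friable (y : ℝ) (n : ℕ) : Prop := ∀ p : ℕ, p.Prime → p ∣ n → (p : ℝ) ≤ y

/-- `S(x,y)`: the set of `y`-friable integers `1 ≤ n ≤ x`. -/
def Sxy (x y : ℝ) : Finset ℕ := (Finset.Icc 1 ⌊x⌋₊).filter (friable y)

/-- `Ψ(x,y) = #S(x,y)`. -/
def Psi (x y : ℝ) : ℕ := (Sxy x y).card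

/-- `D(x,y;γ) = Ψ(x,y)⁻¹ ∑_{n ∈ S(x,y)} τ(n)⁻¹ #{d ∣ n : d ≥ √n e^γ}`. -/
def Dxy (x y γ : ℝ) : ℝ :=
  (Psi x y : ℝ)⁻¹ * ∑ n ∈ Sxy x y,
    ((n.divisors.card : ℝ))⁻¹ *
      ((n.divisors.filter (fun d => Real.sqrt n * Real.exp γ ≤ (d : ℝ))).card : ℝ)

/-- `Φ(v) = ∫_v^∞ e^{-z²/2} dz/√(2π)`. -/
def PhiGauss (v : ℝ) : ℝ :=
  ∫ z in Set.Ioi v, Real.exp (-z ^ 2 / 2) / Real.sqrt (2 * Real.pi)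

/-- `g(z) = log((z^{1/2} − z^{-1/2})/log z)`, with `g(1) = 0`. -/
def gfun (z : ℂ) : ℂ :=
  if z = 1 then 0
  else Complex.log ((z ^ (2⁻¹ : ℂ) - z ^ (-2⁻¹ : ℂ)) / Complex.log z)

/-- `Ξ(a,b) = −(1/2)log(1−a) − (1/2)log(1−b) − g((1−a)/(1−b))`. -/
def Xi (a b : ℂ) : ℂ :=
  -(2⁻¹ : ℂ) * Complex.log (1 - a) - (2⁻¹ : ℂ) * Complex.log (1 - b) -
    gfun ((1 - a) / (1 - b))

/-- `f_y(s,w) = ∑_{p ≤ y} Ξ(p^{-s}, p^{-w})`. -/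
def fy (y : ℝ) (s w : ℂ) : ℂ := ∑ p ∈ primesLe y, Xi ((p : ℂ) ^ (-s)) ((p : ℂ) ^ (-w))

/-- `F_y(s,w) = exp(f_y(s,w))`. -/
def Fy (y : ℝ) (s w : ℂ) : ℂ := Complex.exp (fy y s w)

/-- `F_y(σ,κ)` at real arguments, as a (positive) real number. -/
def FyR (y σ κ : ℝ) : ℝ := Real.exp ((fy y (σ : ℂ) (κ : ℂ)).re)

/-- `∂_{kℓ}f(s,w)`: partial derivative `k` times in the first variable and `ℓ` times
in the second. -/
def pdv (k l : ℕ) (f : ℂ → ℂ → ℂ) (s w : ℂ) : ℂ :=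
  iteratedDeriv k (fun z => iteratedDeriv l (f z) w) s

/-- `Hess[f_y] = (∂₂₀f_y)(∂₀₂f_y) − (∂₁₁f_y)²`. -/
def HessC (y : ℝ) (s w : ℂ) : ℂ :=
  pdv 2 0 (fy y) s w * pdv 0 2 (fy y) s w - (pdv 1 1 (fy y) s w) ^ 2

/-- The domain `D_δ(α;y)`. -/
def Ddom (δ α y : ℝ) : Set (ℝ × ℝ) :=
  {p | 0 < p.1 ∧ p.1 ≤ 1 ∧ 0 < p.2 ∧ p.2 ≤ 1 ∧ 0 ≤ (p.1 - α) * (α - p.2) ∧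
    1 / (1 + δ) ≤ (1 - (2 : ℝ) ^ (-p.1)) / (1 - (2 : ℝ) ^ (-p.2)) ∧
    (1 - (2 : ℝ) ^ (-p.1)) / (1 - (2 : ℝ) ^ (-p.2)) ≤ 1 + δ ∧
    |p.1 - p.2| * Real.log y ≤ δ}

/-- `φ_k(s,y)`: the `k`-th derivative in `s` of `φ₀(s,y) = −∑_{p ≤ y} log(1−p^{-s})`. -/
def phiD (y : ℝ) (k : ℕ) (s : ℂ) : ℂ :=
  iteratedDeriv k (fun z => -∑ p ∈ primesLe y, Complex.log (1 - (p : ℂ) ^ (-z))) s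

/-- `φ₂(σ,y) = ∑_{p ≤ y} (log p)² p^σ/(p^σ−1)²` for real `σ`. -/
def phi2R (y σ : ℝ) : ℝ :=
  ∑ p ∈ primesLe y, (Real.log p) ^ 2 * (p : ℝ) ^ σ / ((p : ℝ) ^ σ - 1) ^ 2

/-!
Writing `σₙ(t) = ∫_{-1/2}^{1/2} sⁿ e^{ts} ds`, one has `g(z) = log σ₀(log z)`, so near real points
`Ξ(a,b) = −½ log(1−a) − ½ log(1−b) − log σ₀(T)` with `T = log((1−a)/(1−b))`. Let `m = σ₁/σ₀` and
`v = σ₂/σ₀ − m²` be the mean and variance of the probability density proportional to `e^{Ts}` on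
`[−½, ½]`; they are the first two derivatives of `log σ₀`. Since `∂ₐT = −1/(1−a)` and
`∂_b T = 1/(1−b)`, the chain rule gives
`∂ₐ²Ξ = (½+m−v)/(1−a)²`, `∂_b²Ξ = (½−m−v)/(1−b)²` and `∂ₐ∂_bΞ = v/((1−a)(1−b))`,
so the Hessian determinant is `(¼ − σ₂/σ₀)/((1−a)(1−b))²`, positive because `s² < ¼` inside
the interval.
-/

open intervalIntegral Filter Topology

def expMoment (n : ℕ) (t : ℂ) : ℂ :=
  ∫ s in (-2⁻¹ : ℝ)..2⁻¹, (s : ℂ) ^ n * Complex.exp (t * s)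

def expMomentReal (n : ℕ) (t : ℝ) : ℝ :=
  ∫ s in (-2⁻¹ : ℝ)..2⁻¹, s ^ n * Real.exp (t * s)

def tiltedMean (t : ℂ) : ℂ := expMoment 1 t / expMoment 0 t

def tiltedVar (t : ℂ) : ℂ := expMoment 2 t / expMoment 0 t - tiltedMean t ^ 2

theorem norm_pow_mul_exp_le {n : ℕ} {s : ℝ} {x : ℂ} {C : ℝ} (hs : |s| ≤ 1) (hx : ‖x‖ ≤ C) :
    ‖(s : ℂ) ^ n * Complex.exp (x * s)‖ ≤ Real.exp C := by
  have hs' : ‖(s : ℂ)‖ ≤ 1 := by rwa [Complex.norm_real, Real.norm_eq_abs]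
  have hre : (x * s).re ≤ C :=
    calc (x * s).re ≤ ‖x * s‖ := Complex.re_le_norm _
      _ = ‖x‖ * ‖(s : ℂ)‖ := norm_mul _ _
      _ ≤ C := by nlinarith [norm_nonneg x, norm_nonneg (s : ℂ)]
  rw [norm_mul, norm_pow, Complex.norm_exp]
  calc ‖(s : ℂ)‖ ^ n * Real.exp (x * s).re ≤ 1 * Real.exp C := by
        gcongr
        · exact pow_le_one₀ (norm_nonneg _) hs'
    _ = Real.exp C := one_mul _

theorem hasDerivAt_expMoment (n : ℕ) (t : ℂ) :
    HasDerivAt (expMoment n) (expMoment (n + 1) t) t := by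
  have hcont (k : ℕ) (x : ℂ) : Continuous fun s : ℝ => (s : ℂ) ^ k * Complex.exp (x * s) := by
    fun_prop
  refine (hasDerivAt_integral_of_dominated_loc_of_deriv_le (μ := volume)
    (F' := fun x (s : ℝ) => (s : ℂ) ^ (n + 1) * Complex.exp (x * s))
    (bound := fun _ => Real.exp (‖t‖ + 1)) (Metric.ball_mem_nhds t one_pos)
    (Eventually.of_forall fun x => (hcont n x).aestronglyMeasurable.restrict)
    ((hcont n t).intervalIntegrable _ _) (hcont (n + 1) t).aestronglyMeasurable.restrict
    ?_ intervalIntegrable_const ?_).2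
  · refine ae_of_all _ fun s hs x hx => norm_pow_mul_exp_le ?_ ?_
    · rw [Set.uIoc_of_le (by norm_num)] at hs
      exact abs_le.2 ⟨by linarith [hs.1], by linarith [hs.2]⟩
    · linarith [norm_le_norm_add_norm_sub' x t, mem_ball_iff_norm.1 hx]
  · refine ae_of_all _ fun s _ x _ => ?_
    have := ((Complex.hasDerivAt_exp (x * s)).comp x (hasDerivAt_mul_const (s : ℂ))).const_mul
      ((s : ℂ) ^ n)
    simpa [pow_succ, mul_comm, mul_assoc, mul_left_comm] using this

theorem continuous_expMoment (n : ℕ) : Continuous (expMoment n) :=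
  continuous_iff_continuousAt.2 fun t => (hasDerivAt_expMoment n t).continuousAt

theorem expMoment_ofReal (n : ℕ) (t : ℝ) : expMoment n t = expMomentReal n t := by
  rw [expMoment, expMomentReal, ← integral_ofReal]
  push_cast
  rfl

theorem expMomentReal_zero_pos (t : ℝ) : 0 < expMomentReal 0 t :=
  intervalIntegral_pos_of_pos ((by fun_prop : Continuous _).intervalIntegrable _ _)
    (fun s => by positivity) (by norm_num)

theorem expMomentReal_two_lt (t : ℝ) : expMomentReal 2 t < 4⁻¹ * expMomentReal 0 t := by
  rw [expMomentReal, expMomentReal, ← intervalIntegral.integral_const_mul]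
  refine integral_lt_integral_of_continuousOn_of_le_of_exists_lt (by norm_num)
    (by fun_prop) (by fun_prop) (fun s hs => ?_) ⟨0, by norm_num, by simp⟩
  have : s ^ 2 ≤ 4⁻¹ := by nlinarith [hs.1, hs.2]
  have := Real.exp_pos (t * s)
  nlinarith

theorem exists_ofReal_tiltedMean_tiltedVar (t : ℝ) :
    ∃ m v : ℝ, tiltedMean t = m ∧ tiltedVar t = v ∧ v + m ^ 2 < 4⁻¹ := by
  have h0 := expMomentReal_zero_pos t
  refine ⟨expMomentReal 1 t / expMomentReal 0 t,
    expMomentReal 2 t / expMomentReal 0 t - (expMomentReal 1 t / expMomentReal 0 t) ^ 2,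
    by simp [tiltedMean, expMoment_ofReal], by simp [tiltedVar, tiltedMean, expMoment_ofReal], ?_⟩
  rw [sub_add_cancel, div_lt_iff₀ h0]
  linarith [expMomentReal_two_lt t]

theorem hasDerivAt_tiltedMean {t : ℂ} (h : expMoment 0 t ≠ 0) :
    HasDerivAt tiltedMean (tiltedVar t) t := by
  refine ((hasDerivAt_expMoment 1 t).div (hasDerivAt_expMoment 0 t) h).congr_deriv ?_
  rw [tiltedVar, tiltedMean]
  field_simp

theorem hasDerivAt_log_expMoment_zero {t : ℂ} (h : expMoment 0 t ∈ Complex.slitPlane) :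
    HasDerivAt (fun t => Complex.log (expMoment 0 t)) (tiltedMean t) t :=
  (hasDerivAt_expMoment 0 t).clog h

theorem expMoment_zero_of_ne_zero {t : ℂ} (ht : t ≠ 0) :
    expMoment 0 t = (Complex.exp (t / 2) - Complex.exp (-(t / 2))) / t := by
  simp only [expMoment, pow_zero, one_mul, integral_exp_mul_complex ht]
  push_cast
  ring_nf

theorem gfun_eq_log_expMoment {z : ℂ} (hz : z ∈ Complex.slitPlane) :
    gfun z = Complex.log (expMoment 0 (Complex.log z)) := by
  rcases eq_or_ne z 1 with rfl | h1
  · norm_num [gfun, expMoment]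
  have hz0 : z ≠ 0 := Complex.slitPlane_ne_zero hz
  have hlog : Complex.log z ≠ 0 := fun h => h1 (by rw [← Complex.exp_log hz0, h, Complex.exp_zero])
  rw [gfun, if_neg h1, expMoment_zero_of_ne_zero hlog, Complex.cpow_def_of_ne_zero hz0,
    Complex.cpow_def_of_ne_zero hz0]
  ring_nf

theorem hasDerivAt_inv_one_sub {𝕜 : Type*} [NontriviallyNormedField 𝕜] {x : 𝕜}
    (hx : 1 - x ≠ 0) :
    HasDerivAt (fun y => (1 - y)⁻¹) ((1 - x)⁻¹ ^ 2) x := by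
  refine ((hasDerivAt_inv hx).comp x ((hasDerivAt_id' x).const_sub 1)).congr_deriv ?_
  simp [inv_pow]

def logRatio (s w : ℂ) : ℂ := Complex.log ((1 - s) / (1 - w))

/-- The open set on which every logarithm in the formula for `Ξ` is holomorphic. -/
def xiDomain : Set (ℂ × ℂ) :=
  {p | 1 - p.1 ∈ Complex.slitPlane ∧ 1 - p.2 ∈ Complex.slitPlane ∧
    (1 - p.1) / (1 - p.2) ∈ Complex.slitPlane ∧ expMoment 0 (logRatio p.1 p.2) ∈ Complex.slitPlane}

theorem isOpen_xiDomain : IsOpen xiDomain := by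
  refine isOpen_iff_mem_nhds.2 fun p ⟨h1, h2, h3, h4⟩ => ?_
  have hZ : ContinuousAt (fun q : ℂ × ℂ => (1 - q.1) / (1 - q.2)) p :=
    by fun_prop (disch := exact Complex.slitPlane_ne_zero h2)
  have hT : ContinuousAt (fun q : ℂ × ℂ => logRatio q.1 q.2) p :=
    ContinuousAt.comp (g := Complex.log) (continuousAt_clog h3) hZ
  have hS : ContinuousAt (fun q : ℂ × ℂ => expMoment 0 (logRatio q.1 q.2)) p :=
    (continuous_expMoment 0).continuousAt.comp hT
  have slit {f : ℂ × ℂ → ℂ} (hf : ContinuousAt f p) (hp : f p ∈ Complex.slitPlane) :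
      ∀ᶠ q in 𝓝 p, f q ∈ Complex.slitPlane :=
    hf.eventually_mem (Complex.isOpen_slitPlane.mem_nhds hp)
  filter_upwards [slit (f := (1 - ·.1)) (by fun_prop) h1, slit (f := (1 - ·.2)) (by fun_prop) h2,
    slit hZ h3, slit hS h4] with q g1 g2 g3 g4
  exact ⟨g1, g2, g3, g4⟩

section

variable {s w : ℂ}

theorem eventually_mem_xiDomain_fst (h : (s, w) ∈ xiDomain) : ∀ᶠ x in 𝓝 s, (x, w) ∈ xiDomain :=
  (Continuous.prodMk_left w).continuousAt.eventually_mem (isOpen_xiDomain.mem_nhds h)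

theorem eventually_mem_xiDomain_snd (h : (s, w) ∈ xiDomain) : ∀ᶠ y in 𝓝 w, (s, y) ∈ xiDomain :=
  (Continuous.prodMk_right s).continuousAt.eventually_mem (isOpen_xiDomain.mem_nhds h)

theorem hasDerivAt_logRatio_fst (h : (s, w) ∈ xiDomain) :
    HasDerivAt (logRatio · w) (-(1 - s)⁻¹) s := by
  obtain ⟨h1, h2, h3, -⟩ := h
  refine ((((hasDerivAt_id' s).const_sub 1).div_const (1 - w)).clog h3).congr_deriv ?_
  field_simp [Complex.slitPlane_ne_zero h1, Complex.slitPlane_ne_zero h2]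

theorem hasDerivAt_logRatio_snd (h : (s, w) ∈ xiDomain) :
    HasDerivAt (logRatio s ·) ((1 - w)⁻¹) w := by
  obtain ⟨h1, h2, h3, -⟩ := h
  have := ((hasDerivAt_inv_one_sub (Complex.slitPlane_ne_zero h2)).const_mul (1 - s)).clog
  simp only [← div_eq_mul_inv] at this
  refine (this h3).congr_deriv ?_
  field_simp [Complex.slitPlane_ne_zero h1, Complex.slitPlane_ne_zero h2]

theorem Xi_eq_log_expMoment (h : (1 - s) / (1 - w) ∈ Complex.slitPlane) :
    Xi s w = -(2⁻¹ : ℂ) * Complex.log (1 - s) - (2⁻¹ : ℂ) * Complex.log (1 - w) -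
      Complex.log (expMoment 0 (logRatio s w)) := by
  rw [Xi, gfun_eq_log_expMoment h, logRatio]

theorem hasDerivAt_Xi_fst (h : (s, w) ∈ xiDomain) :
    HasDerivAt (Xi · w) ((2⁻¹ + tiltedMean (logRatio s w)) * (1 - s)⁻¹) s := by
  have hXi : (Xi · w) =ᶠ[𝓝 s] fun x => -(2⁻¹ : ℂ) * Complex.log (1 - x) -
      (2⁻¹ : ℂ) * Complex.log (1 - w) - Complex.log (expMoment 0 (logRatio x w)) :=
    (eventually_mem_xiDomain_fst h).mono fun x hx => Xi_eq_log_expMoment hx.2.2.1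
  have hlog := ((hasDerivAt_id' s).const_sub 1).clog h.1
  have hL := (hasDerivAt_log_expMoment_zero h.2.2.2).comp s (hasDerivAt_logRatio_fst h)
  refine (((hlog.const_mul _).sub_const _).sub hL).congr_of_eventuallyEq hXi |>.congr_deriv ?_
  field_simp [Complex.slitPlane_ne_zero h.1]
  ring

theorem hasDerivAt_Xi_snd (h : (s, w) ∈ xiDomain) :
    HasDerivAt (Xi s ·) ((2⁻¹ - tiltedMean (logRatio s w)) * (1 - w)⁻¹) w := by
  have hXi : (Xi s ·) =ᶠ[𝓝 w] fun y => -(2⁻¹ : ℂ) * Complex.log (1 - s) -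
      (2⁻¹ : ℂ) * Complex.log (1 - y) - Complex.log (expMoment 0 (logRatio s y)) :=
    (eventually_mem_xiDomain_snd h).mono fun y hy => Xi_eq_log_expMoment hy.2.2.1
  have hlog := ((hasDerivAt_id' w).const_sub 1).clog h.2.1
  have hL := (hasDerivAt_log_expMoment_zero h.2.2.2).comp w (hasDerivAt_logRatio_snd h)
  refine (((hlog.const_mul _).const_sub _).sub hL).congr_of_eventuallyEq hXi |>.congr_deriv ?_
  field_simp [Complex.slitPlane_ne_zero h.2.1]

theorem hasDerivAt_tiltedMean_logRatio_fst (h : (s, w) ∈ xiDomain) :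
    HasDerivAt (fun x => tiltedMean (logRatio x w)) (tiltedVar (logRatio s w) * -(1 - s)⁻¹) s :=
  (hasDerivAt_tiltedMean (Complex.slitPlane_ne_zero h.2.2.2)).comp (h₂ := tiltedMean) s
    (hasDerivAt_logRatio_fst h)

theorem hasDerivAt_tiltedMean_logRatio_snd (h : (s, w) ∈ xiDomain) :
    HasDerivAt (fun y => tiltedMean (logRatio s y)) (tiltedVar (logRatio s w) * (1 - w)⁻¹) w :=
  (hasDerivAt_tiltedMean (Complex.slitPlane_ne_zero h.2.2.2)).comp w (hasDerivAt_logRatio_snd h)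

theorem pdv20_Xi (h : (s, w) ∈ xiDomain) :
    pdv 2 0 Xi s w =
      (2⁻¹ + tiltedMean (logRatio s w) - tiltedVar (logRatio s w)) * (1 - s)⁻¹ ^ 2 := by
  have hd : deriv (Xi · w) =ᶠ[𝓝 s] fun x => (2⁻¹ + tiltedMean (logRatio x w)) * (1 - x)⁻¹ :=
    (eventually_mem_xiDomain_fst h).mono fun x hx => (hasDerivAt_Xi_fst hx).deriv
  have hm := hasDerivAt_tiltedMean_logRatio_fst h
  simp only [pdv, iteratedDeriv_succ, iteratedDeriv_zero]
  rw [hd.deriv_eq]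
  refine ((hm.const_add _).mul
    (hasDerivAt_inv_one_sub (Complex.slitPlane_ne_zero h.1))).deriv.trans ?_
  ring

theorem pdv02_Xi (h : (s, w) ∈ xiDomain) :
    pdv 0 2 Xi s w =
      (2⁻¹ - tiltedMean (logRatio s w) - tiltedVar (logRatio s w)) * (1 - w)⁻¹ ^ 2 := by
  have hd : deriv (Xi s ·) =ᶠ[𝓝 w] fun y => (2⁻¹ - tiltedMean (logRatio s y)) * (1 - y)⁻¹ :=
    (eventually_mem_xiDomain_snd h).mono fun y hy => (hasDerivAt_Xi_snd hy).deriv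
  have hm := hasDerivAt_tiltedMean_logRatio_snd h
  simp only [pdv, iteratedDeriv_succ, iteratedDeriv_zero]
  rw [hd.deriv_eq]
  refine ((hm.const_sub _).mul
    (hasDerivAt_inv_one_sub (Complex.slitPlane_ne_zero h.2.1))).deriv.trans ?_
  ring

theorem pdv11_Xi (h : (s, w) ∈ xiDomain) :
    pdv 1 1 Xi s w = tiltedVar (logRatio s w) * ((1 - s)⁻¹ * (1 - w)⁻¹) := by
  have hd : (fun x => deriv (Xi x ·) w) =ᶠ[𝓝 s]
      fun x => (2⁻¹ - tiltedMean (logRatio x w)) * (1 - w)⁻¹ :=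
    (eventually_mem_xiDomain_fst h).mono fun x hx => (hasDerivAt_Xi_snd hx).deriv
  have hm := hasDerivAt_tiltedMean_logRatio_fst h
  simp only [pdv, iteratedDeriv_one]
  rw [hd.deriv_eq]
  refine ((hm.const_sub _).mul_const _).deriv.trans ?_
  ring

end

theorem logRatio_ofReal {a b : ℝ} (ha : a < 1) (hb : b < 1) :
    logRatio a b = (Real.log ((1 - a) / (1 - b)) : ℂ) := by
  rw [logRatio, Complex.ofReal_log (div_pos (sub_pos.2 ha) (sub_pos.2 hb)).le]
  push_cast
  rfl

theorem ofReal_mem_xiDomain {a b : ℝ} (ha : a < 1) (hb : b < 1) :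
    ((a : ℂ), (b : ℂ)) ∈ xiDomain := by
  have hpos {x : ℝ} (hx : 0 < x) : (x : ℂ) ∈ Complex.slitPlane :=
    Complex.ofReal_mem_slitPlane.2 hx
  refine ⟨?_, ?_, ?_, ?_⟩
  · simpa using hpos (sub_pos.2 ha)
  · simpa using hpos (sub_pos.2 hb)
  · simpa using hpos (div_pos (sub_pos.2 ha) (sub_pos.2 hb))
  · simpa only [logRatio_ofReal ha hb, expMoment_ofReal] using hpos (expMomentReal_zero_pos _)

/-- Lemma 3.(iv): positivity of the Hessian-type expression of `Ξ`
at real points `(a,b) ∈ (0,1)²`. -/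
theorem stmt8 :
    ∀ a b : ℝ, 0 < a → a < 1 → 0 < b → b < 1 →
      (pdv 2 0 Xi (a : ℂ) (b : ℂ)).im = 0 ∧
      (pdv 0 2 Xi (a : ℂ) (b : ℂ)).im = 0 ∧
      (pdv 1 1 Xi (a : ℂ) (b : ℂ)).im = 0 ∧
      0 < (pdv 2 0 Xi (a : ℂ) (b : ℂ)).re * (pdv 0 2 Xi (a : ℂ) (b : ℂ)).re -
            ((pdv 1 1 Xi (a : ℂ) (b : ℂ)).re) ^ 2 := by
  intro a b _ ha _ hb
  have h := ofReal_mem_xiDomain ha hb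
  obtain ⟨m, v, hm, hv, hmv⟩ := exists_ofReal_tiltedMean_tiltedVar (Real.log ((1 - a) / (1 - b)))
  have h20 : pdv 2 0 Xi a b = ((2⁻¹ + m - v) * (1 - a)⁻¹ ^ 2 : ℝ) := by
    rw [pdv20_Xi h, logRatio_ofReal ha hb, hm, hv]; push_cast; ring
  have h02 : pdv 0 2 Xi a b = ((2⁻¹ - m - v) * (1 - b)⁻¹ ^ 2 : ℝ) := by
    rw [pdv02_Xi h, logRatio_ofReal ha hb, hm, hv]; push_cast; ring
  have h11 : pdv 1 1 Xi a b = (v * ((1 - a)⁻¹ * (1 - b)⁻¹) : ℝ) := by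
    rw [pdv11_Xi h, logRatio_ofReal ha hb, hv]; push_cast; ring
  simp only [h20, h02, h11, Complex.ofReal_im, Complex.ofReal_re, true_and]
  have hdet : (2⁻¹ + m - v) * (1 - a)⁻¹ ^ 2 * ((2⁻¹ - m - v) * (1 - b)⁻¹ ^ 2) -
      (v * ((1 - a)⁻¹ * (1 - b)⁻¹)) ^ 2 = (4⁻¹ - (v + m ^ 2)) * ((1 - a)⁻¹ * (1 - b)⁻¹) ^ 2 := by
    ring
  rw [hdet]
  have : 0 < (1 - a)⁻¹ * (1 - b)⁻¹ := by have := sub_pos.2 ha; have := sub_pos.2 hb; positivity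
  have := sub_pos.2 hmv
  positivity

end
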